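/- Define φ̃_j(x) = ∫_0^x ∫_0^t φ_j(u) du dt and Y^N(x) = γ + κx + ∑_{j=0}^N ζ_j φ̃_j(x) for x ∈ [0,1]. Then Y^N is convex on [0,1] if and only if ζ_j ≥ 0 for all j = 0,…,N. -/

import Mathlib

noncomputable def hat (N j : ℕ) (x : ℝ) : ℝ := max 0 (1 - (N : ℝ) * |x - (j : ℝ) / (N : ℝ)|)

noncomputable def hat2 (N j : ℕ) (x : ℝ) : ℝ :=
  ∫ t in (0 : ℝ)..x, ∫ u in (0 : ℝ)..t, hat N j u

noncomputable def Yconv (N : ℕ) (γ κ : ℝ) (ζ : ℕ → ℝ) (x : ℝ) : ℝ :=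
  γ + κ * x + ∑ j ∈ Finset.range (N + 1), ζ j * hat2 N j x

/-! The function `Yconv N γ κ ζ` is twice differentiable with second derivative `∑ ζ_j φ_j`, so
its convexity on `[0, 1]` is equivalent to the nonnegativity of that sum on `[0, 1]`. Because
`φ_k (j / N) = δ_kj`, the sum takes the value `ζ_j` at the node `j / N`; conversely a combination
of the nonnegative hats with nonnegative coefficients is nonnegative. -/

open Set

theorem convexOn_Icc_iff_forall_nonneg_of_hasDerivAt2 {f f' f'' : ℝ → ℝ} {a b : ℝ} (hab : a < b)
    (hf : ∀ x ∈ Icc a b, HasDerivAt f (f' x) x) (hf' : ∀ x ∈ Icc a b, HasDerivAt f' (f'' x) x) :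
    ConvexOn ℝ (Icc a b) f ↔ ∀ x ∈ Icc a b, 0 ≤ f'' x := by
  constructor
  · intro hconv x hx
    have hmono : MonotoneOn f' (Icc a b) :=
      (hconv.monotoneOn_deriv fun y hy => (hf y hy).differentiableAt).congr
        fun y hy => (hf y hy).deriv
    have hacc : AccPt x (Filter.principal (Icc a b)) :=
      isPreconnected_Icc.preperfect_of_nontrivial
        ⟨a, left_mem_Icc.2 hab.le, b, right_mem_Icc.2 hab.le, hab.ne⟩ x hx
    exact (hf' x hx).hasDerivWithinAt.nonneg_of_monotoneOn hacc hmono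
  · intro hf''
    have hint : interior (Icc a b) ⊆ Icc a b := interior_subset
    exact convexOn_of_hasDerivWithinAt2_nonneg (convex_Icc a b)
      (fun x hx => (hf x hx).continuousAt.continuousWithinAt)
      (fun x hx => (hf x (hint hx)).hasDerivWithinAt)
      (fun x hx => (hf' x (hint hx)).hasDerivWithinAt) (fun x hx => hf'' x (hint hx))

theorem continuous_hat (N j : ℕ) : Continuous (hat N j) := by
  unfold hat
  fun_prop

theorem hat_nonneg (N j : ℕ) (x : ℝ) : 0 ≤ hat N j x := le_max_left _ _

theorem hat_natCast_div {N : ℕ} (hN : 0 < N) (k j : ℕ) :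
    hat N k ((j : ℝ) / N) = if k = j then 1 else 0 := by
  have hN' : (0 : ℝ) < N := by exact_mod_cast hN
  have hdist : (N : ℝ) * |(j : ℝ) / N - k / N| = |(j : ℝ) - k| := by
    rw [div_sub_div_same, abs_div, abs_of_pos hN', mul_div_cancel₀ _ hN'.ne']
  unfold hat
  rw [hdist]
  split_ifs with hkj
  · simp [hkj]
  · have hgap : (1 : ℝ) ≤ |(j : ℝ) - k| := by
      have : (1 : ℤ) ≤ |(j : ℤ) - k| := Int.one_le_abs (sub_ne_zero.mpr (by omega))
      exact_mod_cast this
    exact max_eq_left (by linarith)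

theorem hasDerivAt_hat2 (N j : ℕ) (x : ℝ) :
    HasDerivAt (hat2 N j) (∫ u in (0 : ℝ)..x, hat N j u) x :=
  have hprim : Continuous fun t => ∫ u in (0 : ℝ)..t, hat N j u :=
    intervalIntegral.continuous_primitive (fun _ _ => (continuous_hat N j).intervalIntegrable _ _) 0
  (hprim.integral_hasStrictDerivAt 0 x).hasDerivAt

theorem sum_mul_hat_natCast_div {N : ℕ} (hN : 0 < N) (ζ : ℕ → ℝ) {j : ℕ} (hj : j ≤ N) :
    ∑ k ∈ Finset.range (N + 1), ζ k * hat N k ((j : ℝ) / N) = ζ j := by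
  simp only [hat_natCast_div hN, mul_ite, mul_one, mul_zero, Finset.sum_ite_eq', Finset.mem_range,
    Nat.lt_succ_of_le hj, if_true]

theorem forall_sum_mul_hat_nonneg_iff {N : ℕ} (hN : 0 < N) (ζ : ℕ → ℝ) :
    (∀ x ∈ Icc (0 : ℝ) 1, 0 ≤ ∑ k ∈ Finset.range (N + 1), ζ k * hat N k x) ↔ ∀ j ≤ N, 0 ≤ ζ j := by
  constructor
  · intro h j hj
    have hnode : (j : ℝ) / N ∈ Icc (0 : ℝ) 1 :=
      ⟨by positivity, div_le_one_of_le₀ (by exact_mod_cast hj) (Nat.cast_nonneg N)⟩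
    simpa only [sum_mul_hat_natCast_div hN ζ hj] using h _ hnode
  · intro hζ x _
    exact Finset.sum_nonneg fun k hk =>
      mul_nonneg (hζ k (Nat.lt_succ_iff.mp (Finset.mem_range.mp hk))) (hat_nonneg N k x)

section Yconv

variable (N : ℕ) (γ κ : ℝ) (ζ : ℕ → ℝ) (x : ℝ)

theorem hasDerivAt_Yconv :
    HasDerivAt (Yconv N γ κ ζ)
      (κ + ∑ j ∈ Finset.range (N + 1), ζ j * ∫ u in (0 : ℝ)..x, hat N j u) x := by
  have hlin : HasDerivAt (fun x : ℝ => γ + κ * x) κ x := by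
    simpa using ((hasDerivAt_id x).const_mul κ).const_add γ
  exact hlin.add (HasDerivAt.fun_sum fun j _ =>
    (hasDerivAt_hat2 N j x).const_mul (ζ j))

theorem hasDerivAt_deriv_Yconv :
    HasDerivAt (fun x => κ + ∑ j ∈ Finset.range (N + 1), ζ j * ∫ u in (0 : ℝ)..x, hat N j u)
      (∑ j ∈ Finset.range (N + 1), ζ j * hat N j x) x :=
  (HasDerivAt.fun_sum fun j _ =>
    ((continuous_hat N j).integral_hasStrictDerivAt 0 x).hasDerivAt.const_mul (ζ j)).const_add κ

end Yconv

theorem convex_iff_coeffs_nonneg (N : ℕ) (hN : 1 ≤ N) (γ κ : ℝ) (ζ : ℕ → ℝ) :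
    ConvexOn ℝ (Set.Icc (0 : ℝ) 1) (Yconv N γ κ ζ) ↔ (∀ j ≤ N, 0 ≤ ζ j) := by
  rw [convexOn_Icc_iff_forall_nonneg_of_hasDerivAt2 zero_lt_one
    (fun x _ => hasDerivAt_Yconv N γ κ ζ x) (fun x _ => hasDerivAt_deriv_Yconv N κ ζ x)]
  exact forall_sum_mul_hat_nonneg_iff hN ζ
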